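/- arXiv:1707.05747 — 4 statements merged into one kernel-verified Lean document; each statement's English description precedes it below -/
import Mathlib

section
/- Suppose assumptions (A2) and (A4) hold. If (λ*, c*) is a globally optimal solution of the augmented dual problem max{Θ(λ,c) : λ ∈ Λ, c > 0} with Θ(λ,c) = inf_{x∈A} L(x,λ,c), and the zero duality gap property inf_{x∈Ω} f(x) = sup{Θ(λ,c) : λ ∈ Λ, c > 0} holds, then for every globally optimal solution x* of the cone constrained problem, the pair (x*, λ*) is a global saddle point of L(x,λ,c) with least exact penalty parameter c*(x*,λ*) ≤ c*. -/
/-!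
By zero duality gap and dual optimality, `f x* ≤ Θ(λ*, c*) ≤ L(x, λ*, c*)` for every `x ∈ A`,
and by (A4) the right-hand side only grows with `c`. By (A2), feasibility of `x*` gives
`L(x*, λ, c) ≤ f x*` for every `λ ∈ Λ`. So for `c ≥ c*` the value `f x*` separates
`L(x*, ·, c)` on `Λ` from `L(·, λ*, c)` on `A`, which is the saddle point inequality.
-/

open Set

def IsSaddlePointAt {X M : Type*} (L : X → M → ℝ → EReal) (A : Set X) (Λ : Set M)
    (xs : X) (ls : M) (c : ℝ) : Prop :=
  L xs ls c < ⊤ ∧ (∀ l ∈ Λ, L xs l c ≤ L xs ls c) ∧ (∀ x ∈ A, L xs ls c ≤ L x ls c)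

theorem isSaddlePointAt_of_le_of_le {X M : Type*} {L : X → M → ℝ → EReal} {A : Set X}
    {Λ : Set M} {xs : X} {ls : M} {c : ℝ} {v : EReal} (hxs : xs ∈ A) (hls : ls ∈ Λ)
    (hv : v < ⊤) (hupper : ∀ l ∈ Λ, L xs l c ≤ v) (hlower : ∀ x ∈ A, v ≤ L x ls c) :
    IsSaddlePointAt L A Λ xs ls c :=
  ⟨(hupper ls hls).trans_lt hv, fun l hl => (hupper l hl).trans (hlower xs hxs),
    fun x hx => (hupper ls hls).trans (hlower x hx)⟩

theorem le_dual_of_zero_duality_gap {X M α : Type*} [CompleteLattice α] {f : X → α}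
    {S : Set X} {Θ : M → ℝ → α} {Λ : Set M} {xs : X} {ls : M} {cs : ℝ}
    (hxs : ∀ z ∈ S, f xs ≤ f z)
    (hgap : ⨅ x ∈ S, f x = ⨆ l ∈ Λ, ⨆ c ∈ Ioi (0 : ℝ), Θ l c)
    (hdual : ∀ l ∈ Λ, ∀ c : ℝ, 0 < c → Θ l c ≤ Θ ls cs) :
    f xs ≤ Θ ls cs :=
  calc f xs ≤ ⨅ x ∈ S, f x := le_iInf₂ hxs
    _ = ⨆ l ∈ Λ, ⨆ c ∈ Ioi (0 : ℝ), Θ l c := hgap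
    _ ≤ Θ ls cs := iSup₂_le fun l hl => iSup₂_le fun c hc => hdual l hl c hc

theorem stmt5_general
    {X Y : Type*}
    [NormedAddCommGroup Y] [NormedSpace ℝ Y]
    (A : Set X)
    (K : Set Y)
    (Λ : Set (Y →L[ℝ] ℝ))
    (f : X → EReal) (G : X → Y) (Φ : Y → (Y →L[ℝ] ℝ) → ℝ → EReal)
    (L : X → (Y →L[ℝ] ℝ) → ℝ → EReal)
    (hL : ∀ x l c, L x l c = f x + Φ (G x) l c)
    (hA2 : ∀ y ∈ K, ∀ l ∈ Λ, ∀ c : ℝ, 0 < c → Φ y l c ≤ 0)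
    (hA4 : ∀ y l, ∀ c₁ c₂ : ℝ, 0 < c₁ → c₁ ≤ c₂ → Φ y l c₁ ≤ Φ y l c₂)
    (hfeas : ∃ x ∈ A, G x ∈ K ∧ f x < ⊤)
    (Theta : (Y →L[ℝ] ℝ) → ℝ → EReal)
    (hTheta : ∀ l c, Theta l c = ⨅ x ∈ A, L x l c)
    (ls : Y →L[ℝ] ℝ) (hls : ls ∈ Λ) (cstar : ℝ) (hcstar : 0 < cstar)
    (hdualopt : ∀ l ∈ Λ, ∀ c : ℝ, 0 < c → Theta l c ≤ Theta ls cstar)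
    (hgap : (⨅ x ∈ {z ∈ A | G z ∈ K}, f x) = ⨆ l ∈ Λ, ⨆ c ∈ Set.Ioi (0:ℝ), Theta l c)
    (xs : X) (hxs : xs ∈ A) (hxsfeas : G xs ∈ K)
    (hxsopt : ∀ z ∈ A, G z ∈ K → f xs ≤ f z) :
    (∃ c₀ > (0:ℝ), ∀ c ≥ c₀, L xs ls c < ⊤ ∧
      (∀ l ∈ Λ, L xs l c ≤ L xs ls c) ∧ (∀ x ∈ A, L xs ls c ≤ L x ls c)) ∧
    sInf {c₀ : ℝ | 0 < c₀ ∧ ∀ c ≥ c₀, L xs ls c < ⊤ ∧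
      (∀ l ∈ Λ, L xs l c ≤ L xs ls c) ∧ (∀ x ∈ A, L xs ls c ≤ L x ls c)} ≤ cstar := by
  have hf_le_dual : f xs ≤ Theta ls cstar :=
    le_dual_of_zero_duality_gap (fun z hz => hxsopt z hz.1 hz.2) hgap hdualopt
  have hf_lt_top : f xs < ⊤ := by
    obtain ⟨x₀, hx₀, hGx₀, hfx₀⟩ := hfeas
    exact (hxsopt x₀ hx₀ hGx₀).trans_lt hfx₀
  have hsaddle : ∀ c ≥ cstar, IsSaddlePointAt L A Λ xs ls c := fun c hc =>
    isSaddlePointAt_of_le_of_le hxs hls hf_lt_top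
      (fun l hl => by
        rw [hL]
        exact add_le_of_nonpos_right (hA2 _ hxsfeas l hl c (hcstar.trans_le hc)))
      (fun x hx => calc
        f xs ≤ Theta ls cstar := hf_le_dual
        _ ≤ L x ls cstar := by rw [hTheta]; exact iInf₂_le x hx
        _ ≤ L x ls c := by rw [hL, hL]; gcongr; exact hA4 _ _ _ _ hcstar hc)
  exact ⟨⟨cstar, hcstar, hsaddle⟩, csInf_le ⟨0, fun c hc => hc.1.le⟩ ⟨hcstar, hsaddle⟩⟩

theorem stmt5
    {X Y : Type*} [NormedAddCommGroup X] [NormedSpace ℝ X] [FiniteDimensional ℝ X]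
    [NormedAddCommGroup Y] [NormedSpace ℝ Y]
    (A : Set X) (hAne : A.Nonempty)
    (K : Set Y) (hKne : K.Nonempty) (hKcl : IsClosed K) (hKconv : Convex ℝ K)
    (hKcone : ∀ t : ℝ, 0 ≤ t → ∀ y ∈ K, t • y ∈ K)
    (Λ : Set (Y →L[ℝ] ℝ)) (hΛcl : IsClosed Λ) (hΛconv : Convex ℝ Λ)
    (hΛcone : ∀ t : ℝ, 0 ≤ t → ∀ l ∈ Λ, t • l ∈ Λ)
    (f : X → EReal) (G : X → Y) (Φ : Y → (Y →L[ℝ] ℝ) → ℝ → EReal)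
    (L : X → (Y →L[ℝ] ℝ) → ℝ → EReal)
    (hL : ∀ x l c, L x l c = f x + Φ (G x) l c)
    (hA2 : ∀ y ∈ K, ∀ l ∈ Λ, ∀ c : ℝ, 0 < c → Φ y l c ≤ 0)
    (hA4 : ∀ y l, ∀ c₁ c₂ : ℝ, 0 < c₁ → c₁ ≤ c₂ → Φ y l c₁ ≤ Φ y l c₂)
    (hfeas : ∃ x ∈ A, G x ∈ K ∧ f x < ⊤)
    (Theta : (Y →L[ℝ] ℝ) → ℝ → EReal)
    (hTheta : ∀ l c, Theta l c = ⨅ x ∈ A, L x l c)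
    (ls : Y →L[ℝ] ℝ) (hls : ls ∈ Λ) (cstar : ℝ) (hcstar : 0 < cstar)
    (hdualopt : ∀ l ∈ Λ, ∀ c : ℝ, 0 < c → Theta l c ≤ Theta ls cstar)
    (hgap : (⨅ x ∈ {z ∈ A | G z ∈ K}, f x) = ⨆ l ∈ Λ, ⨆ c ∈ Set.Ioi (0:ℝ), Theta l c)
    (xs : X) (hxs : xs ∈ A) (hxsfeas : G xs ∈ K)
    (hxsopt : ∀ z ∈ A, G z ∈ K → f xs ≤ f z) :
    (∃ c₀ > (0:ℝ), ∀ c ≥ c₀, L xs ls c < ⊤ ∧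
      (∀ l ∈ Λ, L xs l c ≤ L xs ls c) ∧ (∀ x ∈ A, L xs ls c ≤ L x ls c)) ∧
    sInf {c₀ : ℝ | 0 < c₀ ∧ ∀ c ≥ c₀, L xs ls c < ⊤ ∧
      (∀ l ∈ Λ, L xs l c ≤ L xs ls c) ∧ (∀ x ∈ A, L xs ls c ≤ L x ls c)} ≤ cstar :=
  stmt5_general A K Λ f G Φ L hL hA2 hA4 hfeas Theta hTheta ls hls cstar hcstar hdualopt hgap xs hxs
    hxsfeas hxsopt
end

section
/- Let assumptions (A4) and (A7) hold, and suppose L(·,λ*,c₀) is bounded below on A for some λ* ∈ Λ and c₀ > 0. Then the set S(λ*,c₁) = {x ∈ A : L(x,λ*,c₁) < f*} is bounded for some c₁ > 0 if and only if there exist c₂ > 0 and α > 0 such that the set Q(λ*,c₂,α) = {x ∈ A : L(x,λ*,c₂) < f*, dist(G(x),K) < α} is bounded. -/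
/-!
Only the implication from `Q` to `S` has content (`Q(λ*, c, α) ⊆ S(λ*, c)` always). Fix a real
`F > f*` and a lower bound `m` of `L(·, λ*, c₀)` on `A`. By (A7), for large `c` the penalty
increment `Φ(y, λ*, c) - Φ(y, λ*, c₀)` exceeds `F - m` wherever `dist(y, K) ≥ α`, so no point with
`L(x, λ*, c) < F` can have `dist(G x, K) ≥ α`. Taking also `c ≥ c₂`, (A4) gives
`S(λ*, c) ⊆ Q(λ*, c₂, α)`.
-/

theorem EReal.lt_top_and_sub_lt_of_le_add_of_add_lt {a b₀ b₁ : EReal} {m F : ℝ}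
    (hm : (m : EReal) ≤ a + b₀) (hF : a + b₁ < F) (hb : b₀ ≤ b₁) :
    b₀ < ⊤ ∧ b₁ - b₀ < ((F - m : ℝ) : EReal) := by
  induction a using EReal.rec <;> induction b₀ using EReal.rec <;>
    induction b₁ using EReal.rec <;> simp_all
  norm_cast at *
  linarith

theorem stmt11_general
    {X Y : Type*} [NormedAddCommGroup X]
    [NormedAddCommGroup Y] [NormedSpace ℝ Y]
    (A : Set X)
    (K : Set Y)
    (Λ : Set (Y →L[ℝ] ℝ))
    (f : X → EReal) (G : X → Y) (Φ : Y → (Y →L[ℝ] ℝ) → ℝ → EReal)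
    (L : X → (Y →L[ℝ] ℝ) → ℝ → EReal)
    (hL : ∀ x l c, L x l c = f x + Φ (G x) l c)
    (hA4 : ∀ y l, ∀ c₁ c₂ : ℝ, 0 < c₁ → c₁ ≤ c₂ → Φ y l c₁ ≤ Φ y l c₂)
    (hA7 : ∀ l ∈ Λ, ∀ c₀ : ℝ, 0 < c₀ → ∀ r > (0:ℝ), ∀ M : ℝ, ∃ C : ℝ, ∀ c ≥ C,
      ∀ y : Y, r ≤ Metric.infDist y K → Φ y l c₀ < ⊤ → (M : EReal) ≤ Φ y l c - Φ y l c₀)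
    (hfeas : ∃ x ∈ A, G x ∈ K ∧ f x < ⊤)
    (ls : Y →L[ℝ] ℝ) (hls : ls ∈ Λ)
    (c₀ : ℝ) (hc₀ : 0 < c₀)
    (hbdd : ∃ m : ℝ, ∀ x ∈ A, (m : EReal) ≤ L x ls c₀)
    (fstar : EReal) (hfstar : fstar = ⨅ x ∈ {z ∈ A | G z ∈ K}, f x) :
    (∃ c₁ > (0:ℝ), Bornology.IsBounded {x ∈ A | L x ls c₁ < fstar}) ↔
      (∃ c₂ > (0:ℝ), ∃ α > (0:ℝ),
        Bornology.IsBounded {x ∈ A | L x ls c₂ < fstar ∧ Metric.infDist (G x) K < α}) := by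
  refine ⟨fun ⟨c₁, hc₁, hS⟩ ↦ ⟨c₁, hc₁, 1, one_pos, hS.subset fun x hx ↦ ⟨hx.1, hx.2.1⟩⟩, ?_⟩
  rintro ⟨c₂, hc₂, α, hα, hQ⟩
  obtain ⟨x₀, hx₀A, hx₀K, hx₀f⟩ := hfeas
  have hfstar_lt_top : fstar < ⊤ := hfstar ▸ (iInf₂_le x₀ ⟨hx₀A, hx₀K⟩).trans_lt hx₀f
  obtain ⟨F, hfstar_lt_F, -⟩ := EReal.lt_iff_exists_real_btwn.mp hfstar_lt_top
  obtain ⟨m, hm⟩ := hbdd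
  obtain ⟨C, hC⟩ := hA7 ls hls c₀ hc₀ α hα (F - m)
  set c₁ := max (max C c₂) c₀
  have hc₀c₁ : c₀ ≤ c₁ := le_max_right _ _
  have hc₂c₁ : c₂ ≤ c₁ := (le_max_right C c₂).trans (le_max_left _ _)
  have hCc₁ : C ≤ c₁ := (le_max_left C c₂).trans (le_max_left _ _)
  refine ⟨c₁, hc₀.trans_le hc₀c₁, hQ.subset ?_⟩
  rintro x ⟨hxA, hxS⟩
  have hLmono : L x ls c₂ ≤ L x ls c₁ := by
    simpa only [hL] using add_le_add_right (hA4 (G x) ls c₂ c₁ hc₂ hc₂c₁) (f x)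
  refine ⟨hxA, hLmono.trans_lt hxS, ?_⟩
  by_contra! hfar
  obtain ⟨hfin, hlt⟩ := EReal.lt_top_and_sub_lt_of_le_add_of_add_lt (hL x ls c₀ ▸ hm x hxA)
    (hL x ls c₁ ▸ hxS.trans hfstar_lt_F) (hA4 (G x) ls c₀ c₁ hc₀ hc₀c₁)
  exact (hC c₁ hCc₁ (G x) hfar hfin).not_gt hlt

theorem stmt11
    {X Y : Type*} [NormedAddCommGroup X] [NormedSpace ℝ X] [FiniteDimensional ℝ X]
    [NormedAddCommGroup Y] [NormedSpace ℝ Y]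
    (A : Set X) (hAne : A.Nonempty)
    (K : Set Y) (hKne : K.Nonempty) (hKcl : IsClosed K) (hKconv : Convex ℝ K)
    (hKcone : ∀ t : ℝ, 0 ≤ t → ∀ y ∈ K, t • y ∈ K)
    (Λ : Set (Y →L[ℝ] ℝ)) (hΛcl : IsClosed Λ) (hΛconv : Convex ℝ Λ)
    (hΛcone : ∀ t : ℝ, 0 ≤ t → ∀ l ∈ Λ, t • l ∈ Λ)
    (f : X → EReal) (G : X → Y) (Φ : Y → (Y →L[ℝ] ℝ) → ℝ → EReal)
    (L : X → (Y →L[ℝ] ℝ) → ℝ → EReal)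
    (hL : ∀ x l c, L x l c = f x + Φ (G x) l c)
    (hA4 : ∀ y l, ∀ c₁ c₂ : ℝ, 0 < c₁ → c₁ ≤ c₂ → Φ y l c₁ ≤ Φ y l c₂)
    (hA7 : ∀ l ∈ Λ, ∀ c₀ : ℝ, 0 < c₀ → ∀ r > (0:ℝ), ∀ M : ℝ, ∃ C : ℝ, ∀ c ≥ C,
      ∀ y : Y, r ≤ Metric.infDist y K → Φ y l c₀ < ⊤ → (M : EReal) ≤ Φ y l c - Φ y l c₀)
    (hfeas : ∃ x ∈ A, G x ∈ K ∧ f x < ⊤)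
    (ls : Y →L[ℝ] ℝ) (hls : ls ∈ Λ)
    (c₀ : ℝ) (hc₀ : 0 < c₀)
    (hbdd : ∃ m : ℝ, ∀ x ∈ A, (m : EReal) ≤ L x ls c₀)
    (fstar : EReal) (hfstar : fstar = ⨅ x ∈ {z ∈ A | G z ∈ K}, f x) :
    (∃ c₁ > (0:ℝ), Bornology.IsBounded {x ∈ A | L x ls c₁ < fstar}) ↔
      (∃ c₂ > (0:ℝ), ∃ α > (0:ℝ),
        Bornology.IsBounded {x ∈ A | L x ls c₂ < fstar ∧ Metric.infDist (G x) K < α}) :=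
  stmt11_general A K Λ f G Φ L hL hA4 hA7 hfeas ls hls c₀ hc₀ hbdd fstar hfstar
end

section
/- Consider the two-constraint problem min f(x) s.t. g₁(x) ≤ 0, g₂(x) ≤ 0 over x ∈ ℝ² with f(x₁,x₂) = x₁² + x₂², g₁(x₁,x₂) = x₁ + x₂ + 2, g₂(x₁,x₂) = ½(x₁+2)² + ½(x₂+2)² − 1, and the exponential penalty augmented Lagrangian L(x,λ,c) = f(x) + (λ₁/c)(e^{c g₁(x)} − 1) + (λ₂/c)(e^{c g₂(x)} − 1). Then the pair x* = (−1,−1), λ* = (−1, 3) is a global saddle point of L: for all c > 0, sup_{λ∈ℝ²} L(x*,λ,c) = L(x*,λ*,c) = 2 and L(x,λ*,c) ≥ 2 for all x ∈ ℝ², even though λ* ∉ ℝ²₊. -/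
/-!
At `x* = (-1, -1)` both constraints vanish, so every penalty term vanishes and
`L (x*, λ, c) = f x* = 2` whatever `λ` is. For the lower bound, `g₁ ≤ g₂` everywhere
(their difference is `½((x₁+1)² + (x₂+1)²)`), and the penalty `t ↦ (e^{ct} - 1)/c` is
increasing, so the negative multiplier `-1` on `g₁` is absorbed by the multiplier `3`
on `g₂`; the penalty also dominates `t`, which leaves `f + 2 g₂ ≥ 2`.
-/

open Real

noncomputable def expPenalty (c t : ℝ) : ℝ := (exp (c * t) - 1) / c

@[simp]
lemma expPenalty_zero_right (c : ℝ) : expPenalty c 0 = 0 := by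
  simp [expPenalty]

lemma le_expPenalty {c : ℝ} (hc : 0 < c) (t : ℝ) : t ≤ expPenalty c t := by
  rw [expPenalty, le_div_iff₀ hc]
  linarith [add_one_le_exp (c * t)]

lemma expPenalty_mono {c : ℝ} (hc : 0 < c) : Monotone (expPenalty c) := fun _ _ hst => by
  unfold expPenalty
  gcongr

lemma add_mul_le_mul_expPenalty_add_mul_expPenalty {a b c s t : ℝ} (hc : 0 < c)
    (ha : a ≤ 0) (hab : 0 ≤ a + b) (hst : s ≤ t) :
    (a + b) * t ≤ a * expPenalty c s + b * expPenalty c t :=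
  calc (a + b) * t ≤ (a + b) * expPenalty c t := by gcongr; exact le_expPenalty hc t
    _ = a * expPenalty c t + b * expPenalty c t := by ring
    _ ≤ a * expPenalty c s + b * expPenalty c t := by
      gcongr ?_ + _
      exact mul_le_mul_of_nonpos_left (expPenalty_mono hc hst) ha

theorem stmt18
    (f : ℝ × ℝ → ℝ) (hf : ∀ x : ℝ × ℝ, f x = x.1 ^ 2 + x.2 ^ 2)
    (g₁ : ℝ × ℝ → ℝ) (hg₁ : ∀ x : ℝ × ℝ, g₁ x = x.1 + x.2 + 2)
    (g₂ : ℝ × ℝ → ℝ)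
    (hg₂ : ∀ x : ℝ × ℝ, g₂ x = (x.1 + 2) ^ 2 / 2 + (x.2 + 2) ^ 2 / 2 - 1)
    (L : ℝ × ℝ → ℝ × ℝ → ℝ → ℝ)
    (hLdef : ∀ (x lam : ℝ × ℝ) (c : ℝ), L x lam c =
      f x + lam.1 / c * (Real.exp (c * g₁ x) - 1) +
        lam.2 / c * (Real.exp (c * g₂ x) - 1)) :
    (∀ c : ℝ, 0 < c →
      (∀ lam : ℝ × ℝ, L (-1, -1) lam c ≤ L (-1, -1) (-1, 3) c) ∧
      L (-1, -1) (-1, 3) c = 2 ∧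
      (∀ x : ℝ × ℝ, 2 ≤ L x (-1, 3) c)) ∧
    ((-1 : ℝ), (3 : ℝ)) ∉ {y : ℝ × ℝ | 0 ≤ y.1 ∧ 0 ≤ y.2} := by
  have hL : ∀ x lam c, L x lam c =
      f x + lam.1 * expPenalty c (g₁ x) + lam.2 * expPenalty c (g₂ x) := by
    intro x lam c
    rw [hLdef, expPenalty, expPenalty]
    ring
  have hL_star : ∀ lam c, L (-1, -1) lam c = 2 := by
    intro lam c
    rw [hL, hf, hg₁, hg₂]
    norm_num
  refine ⟨fun c hc => ⟨fun lam => (hL_star lam c).trans_le (hL_star _ c).ge, hL_star _ c,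
    fun x => ?_⟩, by norm_num⟩
  have hg : g₁ x ≤ g₂ x := by
    rw [hg₁, hg₂]
    nlinarith [sq_nonneg (x.1 + 1), sq_nonneg (x.2 + 1)]
  have hfg : 2 ≤ f x + 2 * g₂ x := by
    rw [hf, hg₂]
    nlinarith [sq_nonneg (x.1 + 1), sq_nonneg (x.2 + 1)]
  calc 2 ≤ f x + (-1 + 3) * g₂ x := by linarith
    _ ≤ f x + (-1 * expPenalty c (g₁ x) + 3 * expPenalty c (g₂ x)) := by
      gcongr
      exact add_mul_le_mul_expPenalty_add_mul_expPenalty hc (by norm_num) (by norm_num) hg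
    _ = L x (-1, 3) c := by rw [hL, add_assoc]
end

section
/- (Key step of the exactness theorem for the Hestenes–Powell–Rockafellar penalized augmented Lagrangian.) With p(x,λ) = a(x)/(1 + Σᵢ λᵢ²) and q(x,λ) = b(x)/(1 + Σⱼ λⱼ²) where a(x), b(x) ≤ α, the penalized augmented Lagrangian L_e(x,λ,c) defined in (the inequality-equality HPR form) satisfies the lower estimate L_e(x,λ,c) ≥ f(x) − α/c + η₁(x,λ) for all x with a(x) > 0, b(x) > 0, all λ ∈ ℝ^{l+s}, and all c > 0. Consequently, for any γ > 0 and any c > α/γ, every (x,λ) with L_e(x,λ,c) < f* satisfies f(x) < f* + γ, a(x) > 0, b(x) > 0. -/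
/-!
Completing the square gives `λ t + c t² / (2P) ≥ -P λ² / (2c)` for every `t`, so each multiplier
block of the augmented Lagrangian is at least `-P ‖λ‖² / (2c)`. Because `P = A / (1 + ‖λ‖²)` with
`0 < A ≤ α`, this is at least `-α / (2c)`, and the two blocks together lose at most `α / c`.
If `L_e(x, λ, c) < f*` then `L_e` is finite, i.e. `a x > 0` and `b x > 0`, and the estimate with
`α / c < γ` gives `f x < f* + γ`.
-/

open Finset

lemma neg_div_mul_sq_le_mul_add_div_mul_sq {P c : ℝ} (hP : 0 < P) (hc : 0 < c) (lam t : ℝ) :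
    -(P / (2 * c)) * lam ^ 2 ≤ lam * t + c / (2 * P) * t ^ 2 := by
  have hsq : lam * t + c / (2 * P) * t ^ 2 + P / (2 * c) * lam ^ 2
      = (c * t + P * lam) ^ 2 / (2 * P * c) := by
    field_simp
    ring
  have : 0 ≤ (c * t + P * lam) ^ 2 / (2 * P * c) := by positivity
  linarith

lemma div_one_add_mul_le {A T : ℝ} (hA : 0 ≤ A) (hT : 0 ≤ T) : A / (1 + T) * T ≤ A := by
  rw [div_mul_eq_mul_div, div_le_iff₀ (by positivity)]
  nlinarith

lemma neg_div_le_sum_mul_add_div_mul_sq {ι : Type*} [Fintype ι] (lam t : ι → ℝ)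
    {A α c P : ℝ} (hA : 0 < A) (hAα : A ≤ α) (hc : 0 < c)
    (hP : P = A / (1 + ∑ i, lam i ^ 2)) :
    -(α / (2 * c)) ≤ ∑ i, (lam i * t i + c / (2 * P) * t i ^ 2) := by
  have hT : 0 ≤ ∑ i, lam i ^ 2 := sum_nonneg fun i _ => sq_nonneg (lam i)
  have hP0 : 0 < P := hP ▸ by positivity
  have hPT : P * ∑ i, lam i ^ 2 ≤ α := hP ▸ (div_one_add_mul_le hA.le hT).trans hAα
  calc -(α / (2 * c)) ≤ -(P / (2 * c)) * ∑ i, lam i ^ 2 := by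
        rw [neg_mul, neg_le_neg_iff, div_mul_eq_mul_div, mul_comm P]
        gcongr
        linarith
    _ = ∑ i, -(P / (2 * c)) * lam i ^ 2 := mul_sum _ _ _
    _ ≤ ∑ i, (lam i * t i + c / (2 * P) * t i ^ 2) :=
        sum_le_sum fun i _ => neg_div_mul_sq_le_mul_add_div_mul_sq hP0 hc (lam i) (t i)

theorem stmt19_general {d l s : ℕ}
    (f : (Fin d → ℝ) → ℝ)
    (gI : Fin l → (Fin d → ℝ) → ℝ) (gJ : Fin s → (Fin d → ℝ) → ℝ)
    (η₁ : (Fin d → ℝ) → (Fin l → ℝ) → (Fin s → ℝ) → ℝ)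
    (hη : ∀ x lam mu, 0 ≤ η₁ x lam mu)
    (α κ : ℝ)
    (a b : (Fin d → ℝ) → ℝ)
    (ha : ∀ x, a x = α - ∑ i, max 0 (gI i x) ^ κ)
    (hb : ∀ x, b x = α - ∑ j, (gJ j x) ^ 2)
    (p q : (Fin d → ℝ) → (Fin l → ℝ) → (Fin s → ℝ) → ℝ)
    (hp : ∀ x lam mu, p x lam mu = a x / (1 + ∑ i, (lam i) ^ 2))
    (hq : ∀ x lam mu, q x lam mu = b x / (1 + ∑ j, (mu j) ^ 2))
    (Le : (Fin d → ℝ) → (Fin l → ℝ) → (Fin s → ℝ) → ℝ → ℝ)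
    (hLe : ∀ x lam mu c, Le x lam mu c =
      f x + (∑ i, (lam i * max (gI i x) (-(p x lam mu / c) * lam i)
        + c / (2 * p x lam mu) * (max (gI i x) (-(p x lam mu / c) * lam i)) ^ 2))
      + (∑ j, (mu j * gJ j x + c / (2 * q x lam mu) * (gJ j x) ^ 2))
      + η₁ x lam mu)
    (LeE : (Fin d → ℝ) → (Fin l → ℝ) → (Fin s → ℝ) → ℝ → EReal)
    (hLeE : ∀ x lam mu c, LeE x lam mu c =
      if 0 < a x ∧ 0 < b x then ((Le x lam mu c : ℝ) : EReal) else ⊤)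
    (fstar : ℝ) :
    (∀ x lam mu, 0 < a x → 0 < b x → ∀ c : ℝ, 0 < c →
      f x - α / c + η₁ x lam mu ≤ Le x lam mu c) ∧
    (∀ γ : ℝ, 0 < γ → ∀ c : ℝ, α / γ < c → ∀ x lam mu,
      LeE x lam mu c < (fstar : EReal) →
      f x < fstar + γ ∧ 0 < a x ∧ 0 < b x) := by
  have ha_le : ∀ x, a x ≤ α := fun x =>
    ha x ▸ sub_le_self α (sum_nonneg fun i _ => Real.rpow_nonneg (le_max_left 0 _) κ)
  have hb_le : ∀ x, b x ≤ α := fun x =>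
    hb x ▸ sub_le_self α (sum_nonneg fun j _ => sq_nonneg (gJ j x))
  have lower : ∀ x lam mu, 0 < a x → 0 < b x → ∀ c : ℝ, 0 < c →
      f x - α / c + η₁ x lam mu ≤ Le x lam mu c := by
    intro x lam mu hax hbx c hc
    have hI := neg_div_le_sum_mul_add_div_mul_sq lam
      (fun i => max (gI i x) (-(p x lam mu / c) * lam i)) hax (ha_le x) hc (hp x lam mu)
    have hJ := neg_div_le_sum_mul_add_div_mul_sq mu
      (fun j => gJ j x) hbx (hb_le x) hc (hq x lam mu)
    have hsplit : α / c = α / (2 * c) + α / (2 * c) := by ring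
    rw [hLe]
    linarith
  refine ⟨lower, fun γ hγ c hcγ x lam mu hlt => ?_⟩
  rw [hLeE] at hlt
  split_ifs at hlt with hab
  · have hLt : Le x lam mu c < fstar := EReal.coe_lt_coe_iff.mp hlt
    have hα : 0 < α := hab.1.trans_le (ha_le x)
    have hc : 0 < c := (div_pos hα hγ).trans hcγ
    have hαc : α / c < γ := (div_lt_comm₀ hγ hc).mp hcγ
    have hlower := lower x lam mu hab.1 hab.2 c hc
    have hη₀ := hη x lam mu
    exact ⟨by linarith, hab⟩
  · exact absurd hlt not_top_lt

theorem stmt19 {d l s : ℕ}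
    (f : (Fin d → ℝ) → ℝ)
    (gI : Fin l → (Fin d → ℝ) → ℝ) (gJ : Fin s → (Fin d → ℝ) → ℝ)
    (η₁ : (Fin d → ℝ) → (Fin l → ℝ) → (Fin s → ℝ) → ℝ)
    (hη : ∀ x lam mu, 0 ≤ η₁ x lam mu)
    (α κ : ℝ) (hα : 0 < α) (hκ : 2 < κ)
    (a b : (Fin d → ℝ) → ℝ)
    (ha : ∀ x, a x = α - ∑ i, max 0 (gI i x) ^ κ)
    (hb : ∀ x, b x = α - ∑ j, (gJ j x) ^ 2)
    (p q : (Fin d → ℝ) → (Fin l → ℝ) → (Fin s → ℝ) → ℝ)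
    (hp : ∀ x lam mu, p x lam mu = a x / (1 + ∑ i, (lam i) ^ 2))
    (hq : ∀ x lam mu, q x lam mu = b x / (1 + ∑ j, (mu j) ^ 2))
    (Le : (Fin d → ℝ) → (Fin l → ℝ) → (Fin s → ℝ) → ℝ → ℝ)
    (hLe : ∀ x lam mu c, Le x lam mu c =
      f x + (∑ i, (lam i * max (gI i x) (-(p x lam mu / c) * lam i)
        + c / (2 * p x lam mu) * (max (gI i x) (-(p x lam mu / c) * lam i)) ^ 2))
      + (∑ j, (mu j * gJ j x + c / (2 * q x lam mu) * (gJ j x) ^ 2))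
      + η₁ x lam mu)
    (LeE : (Fin d → ℝ) → (Fin l → ℝ) → (Fin s → ℝ) → ℝ → EReal)
    (hLeE : ∀ x lam mu c, LeE x lam mu c =
      if 0 < a x ∧ 0 < b x then ((Le x lam mu c : ℝ) : EReal) else ⊤)
    (fstar : ℝ)
    (hfstar : fstar = sInf (f '' {x | (∀ i, gI i x ≤ 0) ∧ ∀ j, gJ j x = 0})) :
    (∀ x lam mu, 0 < a x → 0 < b x → ∀ c : ℝ, 0 < c →
      f x - α / c + η₁ x lam mu ≤ Le x lam mu c) ∧
    (∀ γ : ℝ, 0 < γ → ∀ c : ℝ, α / γ < c → ∀ x lam mu,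
      LeE x lam mu c < (fstar : EReal) →
      f x < fstar + γ ∧ 0 < a x ∧ 0 < b x) :=
  stmt19_general f gI gJ η₁ hη α κ a b ha hb p q hp hq Le hLe LeE hLeE fstar
end
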